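/- arXiv:1112.4637 — 2 statements merged into one kernel-verified Lean document; each statement's English description precedes it below -/
import Mathlib

section
/- Let X be a metric space and g an isometry of X with translation length τ(g) = inf_{x∈X} d(x, g x). If there exists a point x with d(x, g x) = τ(g) > 0 and the angle at x between g⁻¹x and gx equals π (i.e. d(g⁻¹x, gx) = d(g⁻¹x, x) + d(x, gx) in a geodesic space), then the concatenation of the segments [g⁻¹x, x] and [x, gx] extends to a g-invariant geodesic line (an axis of g) through x. -/
open Metric Set Filter

/-- `γ` restricted to the parameter set `s` is a unit-speed geodesic. -/
def IsGeodesicOn {X : Type*} [MetricSpace X] (γ : ℝ → X) (s : Set ℝ) : Prop :=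
  ∀ a ∈ s, ∀ b ∈ s, dist (γ a) (γ b) = |a - b|

/-- `X` is a geodesic metric space. -/
def GeodesicSpace (X : Type*) [MetricSpace X] : Prop :=
  ∀ x y : X, ∃ γ : ℝ → X,
    IsGeodesicOn γ (Set.Icc 0 (dist x y)) ∧ γ 0 = x ∧ γ (dist x y) = y

/-- CAT(0): geodesic and the CN (Bruhat–Tits) inequality holds at midpoints. -/
def CAT0 (X : Type*) [MetricSpace X] : Prop :=
  GeodesicSpace X ∧ ∀ x y z m : X, dist y m = dist y z / 2 → dist m z = dist y z / 2 →
    dist x m ^ 2 ≤ (dist x y ^ 2 + dist x z ^ 2) / 2 - dist y z ^ 2 / 4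

/-- Translation length of an isometry. -/
noncomputable def translationLength {X : Type*} [MetricSpace X] (g : X ≃ᵢ X) : ℝ :=
  ⨅ x, dist x (g x)

/-- The set of points realising the translation length. -/
def MinSet {X : Type*} [MetricSpace X] (g : X ≃ᵢ X) : Set X :=
  {x | dist x (g x) = translationLength g}

/-- Euclidean comparison angle at `p` between `q` and `r`. -/
noncomputable def compAngle {X : Type*} [MetricSpace X] (p q r : X) : ℝ :=
  Real.arccos ((dist p q ^ 2 + dist p r ^ 2 - dist q r ^ 2) / (2 * dist p q * dist p r))

private lemma aux_pow_dist {X : Type*} [MetricSpace X]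
    (hCN : ∀ x y z m : X, dist y m = dist y z / 2 → dist m z = dist y z / 2 →
      dist x m ^ 2 ≤ (dist x y ^ 2 + dist x z ^ 2) / 2 - dist y z ^ 2 / 4)
    (g : X ≃ᵢ X) (x : X) (τ : ℝ)
    (h1 : dist x (g x) = τ)
    (h2 : dist x ((g ^ (2:ℤ)) x) = 2 * τ) :
    ∀ m n : ℤ, dist ((g ^ m) x) ((g ^ n) x) = |(n:ℝ) - m| * τ := by
  have hτ0 : 0 ≤ τ := h1 ▸ dist_nonneg
  have step : ∀ m : ℤ, dist ((g ^ m) x) ((g ^ (m+1)) x) = τ := by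
    intro m
    have e : (g ^ (m+1)) x = (g ^ m) (g x) := by rw [zpow_add_one]; rfl
    rw [e, (g ^ m).dist_eq, h1]
  have step2 : ∀ m : ℤ, dist ((g ^ m) x) ((g ^ (m+2)) x) = 2 * τ := by
    intro m
    have e : (g ^ (m+2)) x = (g ^ m) ((g ^ (2:ℤ)) x) := by rw [zpow_add]; rfl
    rw [e, (g ^ m).dist_eq, h2]
  have hpair : ∀ n : ℕ, dist x ((g ^ (n:ℤ)) x) = n * τ ∧
      dist x ((g ^ ((n:ℤ)+1)) x) = ((n:ℝ)+1) * τ := by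
    intro n
    induction n with
    | zero =>
      refine ⟨by simp, ?_⟩
      have := step 0
      simp only [zpow_zero] at this
      simpa using this
    | succ n ih =>
      obtain ⟨ih1, ih2⟩ := ih
      have hcast : ((n+1 : ℕ) : ℤ) = (n:ℤ) + 1 := by push_cast; ring
      constructor
      · rw [hcast, ih2]; push_cast; ring
      · rw [hcast]
        have hyz := step2 (n:ℤ)
        have hym : dist ((g ^ (n:ℤ)) x) ((g ^ ((n:ℤ)+1)) x)
            = dist ((g ^ (n:ℤ)) x) ((g ^ ((n:ℤ)+2)) x) / 2 := by
          rw [step, hyz]; ring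
        have hmz : dist ((g ^ ((n:ℤ)+1)) x) ((g ^ ((n:ℤ)+2)) x)
            = dist ((g ^ (n:ℤ)) x) ((g ^ ((n:ℤ)+2)) x) / 2 := by
          have := step ((n:ℤ)+1)
          rw [show (n:ℤ)+1+1 = (n:ℤ)+2 by ring] at this
          rw [this, hyz]; ring
        have hcn := hCN x ((g ^ (n:ℤ)) x) ((g ^ ((n:ℤ)+2)) x) ((g ^ ((n:ℤ)+1)) x) hym hmz
        rw [ih1, ih2, hyz] at hcn
        set D := dist x ((g ^ ((n:ℤ)+2)) x) with hD
        have Dnn : 0 ≤ D := dist_nonneg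
        have Dle : D ≤ ((n:ℝ)+2) * τ := by
          have tri := dist_triangle x ((g ^ ((n:ℤ)+1)) x) ((g ^ ((n:ℤ)+2)) x)
          have := step ((n:ℤ)+1)
          rw [show (n:ℤ)+1+1 = (n:ℤ)+2 by ring] at this
          rw [ih2, this] at tri
          linarith
        have Dge : ((n:ℝ)+2) * τ ≤ D := by nlinarith [hcn, Dle, Dnn, hτ0, sq_nonneg (D - ((n:ℝ)+2)*τ)]
        have : D = ((n:ℝ)+2) * τ := le_antisymm Dle Dge
        rw [show (n:ℤ)+1+1 = (n:ℤ)+2 by ring, ← hD, this]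
        push_cast; ring
  have hz : ∀ k : ℤ, dist x ((g ^ k) x) = |(k:ℝ)| * τ := by
    intro k
    obtain ⟨n, rfl | rfl⟩ := k.eq_nat_or_neg
    · rw [(hpair n).1]
      rw [show |((n:ℤ):ℝ)| = ((n:ℕ):ℝ) by push_cast; exact abs_of_nonneg (Nat.cast_nonneg n)]
    · have e : (g ^ ((n:ℤ))) ((g ^ (-(n:ℤ))) x) = x := by
        rw [show (g ^ ((n:ℤ))) ((g ^ (-(n:ℤ))) x) = ((g ^ ((n:ℤ))) * (g ^ (-(n:ℤ)))) x from rfl,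
          ← zpow_add]
        simp
      have h := (g ^ (n:ℤ)).dist_eq x ((g ^ (-(n:ℤ))) x)
      rw [e] at h
      rw [← h, dist_comm, (hpair n).1]
      congr 1
      push_cast
      rw [abs_neg, abs_of_nonneg (Nat.cast_nonneg n)]
  intro m n
  have e1 : (g ^ (-m)) ((g ^ m) x) = x := by
    rw [show (g ^ (-m)) ((g ^ m) x) = ((g ^ (-m)) * (g ^ m)) x from rfl, ← zpow_add]
    simp
  have e2 : (g ^ (-m)) ((g ^ n) x) = (g ^ (n - m)) x := by
    rw [show (g ^ (-m)) ((g ^ n) x) = ((g ^ (-m)) * (g ^ n)) x from rfl, ← zpow_add,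
      show -m + n = n - m by ring]
  have h := (g ^ (-m)).dist_eq ((g ^ m) x) ((g ^ n) x)
  rw [e1, e2] at h
  rw [← h, hz (n - m)]
  congr 1
  push_cast
  ring_nf

private lemma aux_main {X : Type*} [MetricSpace X] (g : X ≃ᵢ X) (x : X) (τ : ℝ)
    (hτ : 0 < τ) (γ : ℝ → X)
    (hγ : ∀ a ∈ Set.Icc 0 τ, ∀ b ∈ Set.Icc 0 τ, dist (γ a) (γ b) = |a - b|)
    (hγ0 : γ 0 = x) (hγτ : γ τ = g x)
    (hpow : ∀ m n : ℤ, dist ((g ^ m) x) ((g ^ n) x) = |(n:ℝ) - m| * τ) :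
    ∃ ℓ : ℝ → X, IsGeodesicOn ℓ Set.univ ∧ ℓ 0 = x ∧
      ℓ τ = g x ∧ ℓ (-τ) = g.symm x ∧ ∀ t : ℝ, g (ℓ t) = ℓ (t + τ) := by
  have hτne : τ ≠ 0 := ne_of_gt hτ
  have hfle : ∀ t : ℝ, (⌊t/τ⌋:ℝ) * τ ≤ t := by
    intro t
    have h := Int.floor_le (t/τ)
    have := mul_le_mul_of_nonneg_right h (le_of_lt hτ)
    rwa [div_mul_cancel₀ t hτne] at this
  have hflt : ∀ t : ℝ, t < ((⌊t/τ⌋:ℝ) + 1) * τ := by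
    intro t
    have h := Int.lt_floor_add_one (t/τ)
    have := mul_lt_mul_of_pos_right h hτ
    rwa [div_mul_cancel₀ t hτne] at this
  have hrmem : ∀ t : ℝ, t - (⌊t/τ⌋:ℝ) * τ ∈ Set.Icc 0 τ := by
    intro t
    constructor
    · linarith [hfle t]
    · nlinarith [hflt t]
  have hτmem : τ ∈ Set.Icc 0 τ := ⟨le_of_lt hτ, le_refl τ⟩
  have h0mem : (0:ℝ) ∈ Set.Icc 0 τ := ⟨le_refl 0, le_of_lt hτ⟩
  -- upper bound
  have ub : ∀ k : ℕ, ∀ s t : ℝ, s ≤ t → ⌊t/τ⌋ = ⌊s/τ⌋ + k →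
      dist ((g ^ ⌊s/τ⌋) (γ (s - (⌊s/τ⌋:ℝ) * τ))) ((g ^ ⌊t/τ⌋) (γ (t - (⌊t/τ⌋:ℝ) * τ))) ≤ t - s := by
    intro k
    induction k with
    | zero =>
      intro s t hst hfl
      rw [Nat.cast_zero, add_zero] at hfl
      have hmt := hrmem t
      rw [hfl] at hmt ⊢
      rw [(g ^ ⌊s/τ⌋).dist_eq, hγ _ (hrmem s) _ hmt]
      have : |s - (⌊s/τ⌋:ℝ)*τ - (t - (⌊s/τ⌋:ℝ)*τ)| = t - s := by
        rw [show s - (⌊s/τ⌋:ℝ)*τ - (t - (⌊s/τ⌋:ℝ)*τ) = -(t - s) by ring, abs_neg,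
          abs_of_nonneg (by linarith)]
      rw [this]
    | succ k ih =>
      intro s t hst hfl
      set u : ℝ := ((⌊s/τ⌋:ℝ) + 1) * τ with hu
      have hnu : ⌊u/τ⌋ = ⌊s/τ⌋ + 1 := by
        rw [hu, mul_div_cancel_right₀ _ hτne]
        rw [show ((⌊s/τ⌋:ℝ) + 1) = ((⌊s/τ⌋ + 1 : ℤ) : ℝ) by push_cast; ring, Int.floor_intCast]
      have hsu : s ≤ u := le_of_lt (hflt s)
      have hut : u ≤ t := by
        have h1 := hfle t
        have h2 : (⌊s/τ⌋:ℤ) + 1 ≤ ⌊t/τ⌋ := by omega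
        have h3 : ((⌊s/τ⌋:ℝ) + 1) ≤ (⌊t/τ⌋:ℝ) := by exact_mod_cast h2
        nlinarith
      have hru : u - (⌊u/τ⌋:ℝ) * τ = 0 := by rw [hnu]; push_cast; ring
      have hEu : (g ^ ⌊u/τ⌋) (γ (u - (⌊u/τ⌋:ℝ) * τ)) = (g ^ ⌊s/τ⌋) (γ τ) := by
        rw [hru, hγ0, hnu, hγτ, zpow_add_one]; rfl
      have d1 : dist ((g ^ ⌊s/τ⌋) (γ (s - (⌊s/τ⌋:ℝ) * τ))) ((g ^ ⌊u/τ⌋) (γ (u - (⌊u/τ⌋:ℝ) * τ)))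
          = u - s := by
        rw [hEu, (g ^ ⌊s/τ⌋).dist_eq, hγ _ (hrmem s) τ hτmem]
        rw [abs_of_nonpos (by nlinarith [hflt s])]
        rw [hu]; ring
      have hflu : ⌊t/τ⌋ = ⌊u/τ⌋ + k := by rw [hnu]; push_cast at hfl ⊢; omega
      have d2 := ih u t hut hflu
      calc dist ((g ^ ⌊s/τ⌋) (γ (s - (⌊s/τ⌋:ℝ) * τ))) ((g ^ ⌊t/τ⌋) (γ (t - (⌊t/τ⌋:ℝ) * τ)))
          ≤ dist ((g ^ ⌊s/τ⌋) (γ (s - (⌊s/τ⌋:ℝ) * τ))) ((g ^ ⌊u/τ⌋) (γ (u - (⌊u/τ⌋:ℝ) * τ)))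
            + dist ((g ^ ⌊u/τ⌋) (γ (u - (⌊u/τ⌋:ℝ) * τ))) ((g ^ ⌊t/τ⌋) (γ (t - (⌊t/τ⌋:ℝ) * τ))) :=
            dist_triangle _ _ _
        _ ≤ (u - s) + (t - u) := by rw [d1]; linarith
        _ = t - s := by ring
  -- lower bound
  have lb : ∀ s t : ℝ, s ≤ t →
      t - s ≤ dist ((g ^ ⌊s/τ⌋) (γ (s - (⌊s/τ⌋:ℝ) * τ))) ((g ^ ⌊t/τ⌋) (γ (t - (⌊t/τ⌋:ℝ) * τ))) := by
    intro s t hst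
    have hmn : ⌊s/τ⌋ ≤ ⌊t/τ⌋ := Int.floor_le_floor (by gcongr)
    have hmnR : (⌊s/τ⌋:ℝ) ≤ (⌊t/τ⌋:ℝ) := by exact_mod_cast hmn
    have hAB : dist ((g ^ ⌊s/τ⌋) x) ((g ^ (⌊t/τ⌋ + 1)) x)
        = (⌊t/τ⌋:ℝ) * τ + τ - (⌊s/τ⌋:ℝ) * τ := by
      rw [hpow]
      rw [show |((⌊t/τ⌋ + 1 : ℤ):ℝ) - (⌊s/τ⌋:ℝ)| = (⌊t/τ⌋:ℝ) + 1 - (⌊s/τ⌋:ℝ) by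
        push_cast; rw [abs_of_nonneg (by linarith)]]
      ring
    have dA : dist ((g ^ ⌊s/τ⌋) x) ((g ^ ⌊s/τ⌋) (γ (s - (⌊s/τ⌋:ℝ) * τ)))
        = s - (⌊s/τ⌋:ℝ) * τ := by
      rw [← hγ0, (g ^ ⌊s/τ⌋).dist_eq, hγ 0 h0mem _ (hrmem s)]
      rw [show (0:ℝ) - (s - (⌊s/τ⌋:ℝ)*τ) = -(s - (⌊s/τ⌋:ℝ)*τ) by ring, abs_neg,
        abs_of_nonneg (hrmem s).1]
    have hEB : (g ^ (⌊t/τ⌋ + 1)) x = (g ^ ⌊t/τ⌋) (γ τ) := by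
      rw [hγτ, zpow_add_one]; rfl
    have dB : dist ((g ^ ⌊t/τ⌋) (γ (t - (⌊t/τ⌋:ℝ) * τ))) ((g ^ (⌊t/τ⌋ + 1)) x)
        = τ - (t - (⌊t/τ⌋:ℝ) * τ) := by
      rw [hEB, (g ^ ⌊t/τ⌋).dist_eq, hγ _ (hrmem t) τ hτmem]
      rw [abs_of_nonpos (by nlinarith [hflt t])]
      ring
    have tri := dist_triangle4 ((g ^ ⌊s/τ⌋) x)
      ((g ^ ⌊s/τ⌋) (γ (s - (⌊s/τ⌋:ℝ) * τ)))
      ((g ^ ⌊t/τ⌋) (γ (t - (⌊t/τ⌋:ℝ) * τ))) ((g ^ (⌊t/τ⌋ + 1)) x)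
    rw [hAB, dA, dB] at tri
    linarith
  refine ⟨fun t => (g ^ ⌊t/τ⌋) (γ (t - (⌊t/τ⌋:ℝ) * τ)), ?_, ?_, ?_, ?_, ?_⟩
  · intro a _ b _
    simp only
    rcases le_total a b with hab | hab
    · have hmn : ⌊a/τ⌋ ≤ ⌊b/τ⌋ := Int.floor_le_floor (by gcongr)
      have hk : ⌊b/τ⌋ = ⌊a/τ⌋ + ((⌊b/τ⌋ - ⌊a/τ⌋).toNat : ℤ) := by
        rw [Int.toNat_of_nonneg (by omega)]; ring
      have h1 := ub (⌊b/τ⌋ - ⌊a/τ⌋).toNat a b hab hk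
      have h2 := lb a b hab
      rw [abs_sub_comm, abs_of_nonneg (sub_nonneg.2 hab)]
      linarith
    · have hmn : ⌊b/τ⌋ ≤ ⌊a/τ⌋ := Int.floor_le_floor (by gcongr)
      have hk : ⌊a/τ⌋ = ⌊b/τ⌋ + ((⌊a/τ⌋ - ⌊b/τ⌋).toNat : ℤ) := by
        rw [Int.toNat_of_nonneg (by omega)]; ring
      have h1 := ub (⌊a/τ⌋ - ⌊b/τ⌋).toNat b a hab hk
      have h2 := lb b a hab
      rw [dist_comm, abs_of_nonneg (sub_nonneg.2 hab)]
      linarith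
  · simp [hγ0]
  · have h1 : ⌊τ/τ⌋ = (1:ℤ) := by rw [div_self hτne]; exact Int.floor_one
    simp only [h1]
    norm_num [hγ0]
  · have h1 : ⌊(-τ)/τ⌋ = (-1:ℤ) := by
      rw [neg_div, div_self hτne]
      norm_num
    simp only [h1]
    rw [show -τ - ((-1:ℤ):ℝ) * τ = 0 by push_cast; ring, hγ0, zpow_neg_one]
    rfl
  · intro t
    simp only
    have hfl : ⌊(t + τ)/τ⌋ = ⌊t/τ⌋ + 1 := by
      rw [add_div, div_self hτne]
      exact_mod_cast Int.floor_add_one (t/τ)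
    rw [hfl]
    rw [show t + τ - ((⌊t/τ⌋ + 1 : ℤ):ℝ) * τ = t - (⌊t/τ⌋:ℝ) * τ by push_cast; ring]
    rw [show (⌊t/τ⌋:ℤ) + 1 = 1 + ⌊t/τ⌋ by ring, zpow_add, zpow_one]
    rfl

/-- an isometry attaining a positive translation length at a point
where the angle between the incoming and outgoing segments is π has a
g-invariant axis through that point. -/
theorem stmt0 {X : Type*} [MetricSpace X] [ProperSpace X] (hX : CAT0 X)
    (g : X ≃ᵢ X) (x : X)
    (hmin : dist x (g x) = translationLength g)
    (hpos : 0 < translationLength g)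
    (hangle : dist (g.symm x) (g x) = dist (g.symm x) x + dist x (g x)) :
    ∃ ℓ : ℝ → X, IsGeodesicOn ℓ Set.univ ∧ ℓ 0 = x ∧
      ℓ (translationLength g) = g x ∧ ℓ (-(translationLength g)) = g.symm x ∧
      ∀ t : ℝ, g (ℓ t) = ℓ (t + translationLength g) := by
  obtain ⟨hGeo, hCN⟩ := hX
  have hgs : dist (g.symm x) x = translationLength g := by
    have h4 : dist (g (g.symm x)) (g x) = dist (g.symm x) x := g.dist_eq _ _
    rw [g.apply_symm_apply] at h4
    rw [← h4, hmin]
  have h2 : dist x ((g ^ (2:ℤ)) x) = 2 * translationLength g := by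
    have e : (g ^ (2:ℤ)) x = g (g x) := by
      rw [show (2:ℤ) = 1 + 1 by norm_num, zpow_add_one, zpow_one]; rfl
    have h3 : dist (g (g.symm x)) (g (g x)) = dist (g.symm x) (g x) := g.dist_eq _ _
    rw [g.apply_symm_apply] at h3
    rw [e, h3, hangle, hgs, hmin]; ring
  have hpow := aux_pow_dist hCN g x _ hmin h2
  obtain ⟨γ, hγ, hγ0, hγτ⟩ := hGeo x (g x)
  rw [hmin] at hγ hγτ
  exact aux_main g x _ hpos γ hγ hγ0 hγτ hpow
end

section
/- Let G act by isometries on a CAT(0) metric space Y and suppose for some y ∈ Y and g ∈ G the triple (y, gy, g²y) satisfies d(y, g²y) = 2 d(y, gy) > 0. Then for all n ≥ 0, d(y, gⁿy) = n·d(y,gy), i.e. the orbit of y under g lies along a geodesic. -/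
open Metric Set Filter

/-- in a CAT(0) space, if d(y, g²y) = 2 d(y, gy) > 0 then
d(y, gⁿy) = n·d(y, gy) for all n. -/
theorem stmt14 {Y G : Type*} [MetricSpace Y] (hY : CAT0 Y)
    [Group G] [MulAction G Y]
    (hiso : ∀ g : G, Isometry (fun y : Y => g • y))
    (g : G) (y : Y)
    (h2 : dist y ((g * g) • y) = 2 * dist y (g • y))
    (hpos : 0 < dist y (g • y)) :
    ∀ n : ℕ, dist y ((g ^ n) • y) = (n : ℝ) * dist y (g • y) := by
  obtain ⟨-, hCN⟩ := hY
  set d := dist y (g • y) with hd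
  -- translates
  have e1 : ∀ k : ℕ, dist ((g ^ k) • y) ((g ^ (k + 1)) • y) = d := by
    intro k
    have := (hiso (g ^ k)).dist_eq y (g • y)
    simpa [pow_succ, mul_smul] using this
  have e2 : ∀ k : ℕ, dist ((g ^ k) • y) ((g ^ (k + 2)) • y) = 2 * d := by
    intro k
    have := (hiso (g ^ k)).dist_eq y ((g * g) • y)
    have h : (g ^ (k + 2)) • y = (g ^ k) • ((g * g) • y) := by
      rw [← mul_smul, ← pow_two, ← pow_add]
    rw [h]
    simpa [h2] using this
  have key : ∀ n : ℕ, dist y ((g ^ n) • y) = (n : ℝ) * d ∧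
      dist y ((g ^ (n + 1)) • y) = ((n : ℝ) + 1) * d := by
    intro n
    induction n with
    | zero => simp [hd]
    | succ n ih =>
      obtain ⟨h1, h1'⟩ := ih
      refine ⟨by push_cast; linarith [h1'], ?_⟩
      have hmid1 : dist ((g ^ n) • y) ((g ^ (n + 1)) • y) =
          dist ((g ^ n) • y) ((g ^ (n + 2)) • y) / 2 := by
        rw [e1, e2]; ring
      have hmid2 : dist ((g ^ (n + 1)) • y) ((g ^ (n + 2)) • y) =
          dist ((g ^ n) • y) ((g ^ (n + 2)) • y) / 2 := by
        rw [e1 (n + 1), e2]; ring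
      have hcn := hCN y ((g ^ n) • y) ((g ^ (n + 2)) • y) ((g ^ (n + 1)) • y)
        hmid1 hmid2
      rw [e2, h1, h1'] at hcn
      -- triangle upper bound
      have htri : dist y ((g ^ (n + 2)) • y) ≤
          dist y ((g ^ (n + 1)) • y) + dist ((g ^ (n + 1)) • y) ((g ^ (n + 2)) • y) :=
        dist_triangle _ _ _
      rw [h1', e1 (n + 1)] at htri
      have hD0 : 0 ≤ dist y ((g ^ (n + 2)) • y) := dist_nonneg
      have hgoal : dist y ((g ^ (n + 2)) • y) = ((n : ℝ) + 2) * d := by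
        nlinarith [hcn, htri, hD0, hpos.le]
      push_cast
      rw [show n + 1 + 1 = n + 2 from rfl, hgoal]
      ring
  intro n
  exact (key n).1
end
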